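/- Let m = p^t with p the characteristic of F_q, and let C be the 2-generator QC code generated by ([(x-1)^{r_1}], [v_1 (x-1)^{r_1}]) and ([v_2 (x-1)^{r_2}], [(x-1)^{r_2}]) where gcd(v_1 v_2 - 1, x^{p^t} - 1) = 1 and 0 < r_1 < r_2 < (p^t - 1)/2. Then C^{⊥_E} ⊆ C, i.e., C is Euclidean dual-containing. -/

import Mathlib

open Polynomial

/-- The coefficient vector in `F^m` of (the canonical degree `< m` representative of)
a polynomial modulo `x^m - 1`. -/
noncomputable def coeffVec (F : Type) [Field F] (m : ℕ) (p : F[X]) : Fin m → F :=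
  fun i => (p %ₘ (X ^ m - 1)).coeff i

namespace QCAux

variable {F : Type} [Field F]

lemma monic_q (m : ℕ) (hm : 0 < m) : ((X : F[X]) ^ m - 1).Monic := by
  simpa using monic_X_pow_sub_C (1 : F) hm.ne'

lemma degree_q (m : ℕ) (hm : 0 < m) : ((X : F[X]) ^ m - 1).degree = m := by
  simpa using degree_X_pow_sub_C hm (1 : F)

/-- Coefficients of the remainder mod `X^m - 1` of a polynomial of degree `< 2m`. -/
lemma coeff_mod (m : ℕ) (hm : 0 < m) (f : F[X]) (hf : f.natDegree < 2 * m)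
    (i : ℕ) (him : i < m) :
    (f %ₘ ((X : F[X]) ^ m - 1)).coeff i = f.coeff i + f.coeff (m + i) := by
  set q : F[X] := X ^ m - 1 with hqdef
  set g : F[X] := ∑ j ∈ Finset.range m, C (f.coeff (m + j)) * X ^ j with hg
  have hgc : ∀ k, g.coeff k = if k < m then f.coeff (m + k) else 0 := by
    intro k
    rw [hg, finset_sum_coeff]
    simp only [coeff_C_mul, coeff_X_pow, mul_ite, mul_one, mul_zero]
    rw [Finset.sum_ite_eq (Finset.range m) k fun j => f.coeff (m + j)]
    simp [Finset.mem_range]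
  have hqg : ∀ k, (q * g).coeff k = (if m ≤ k then g.coeff (k - m) else 0) - g.coeff k := by
    intro k
    have e : q * g = g * X ^ m - g := by rw [hqdef]; ring
    rw [e, coeff_sub, coeff_mul_X_pow']
  have hr : ∀ k, m ≤ k → (f - q * g).coeff k = 0 := by
    intro k hk
    rw [coeff_sub, hqg, hgc, hgc]
    by_cases h2 : k < 2 * m
    · have h3 : k - m < m := by omega
      have h4 : m + (k - m) = k := by omega
      simp [hk, h3, h4, not_lt.2 hk]
    · have hfk : f.coeff k = 0 := coeff_eq_zero_of_natDegree_lt (by omega)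
      have h3 : ¬(k - m < m) := by omega
      have h5 : f.coeff (m + (k - m)) = 0 := by
        rw [show m + (k - m) = k by omega]; exact hfk
      simp [hk, h3, hfk, not_lt.2 hk]
  have hdeg : (f - q * g).degree < (m : ℕ) :=
    (degree_lt_iff_coeff_zero _ _).2 fun k hk => hr k hk
  have hmod : f %ₘ q = f - q * g := by
    have h1 : f %ₘ q = (f - q * g) %ₘ q :=
      modByMonic_eq_of_dvd_sub (monic_q m hm) ⟨g, by ring⟩
    rw [h1, (modByMonic_eq_self_iff (monic_q m hm)).2 (by rw [degree_q m hm]; exact hdeg)]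
  rw [hmod, coeff_sub, hqg]
  have h6 : ¬ m ≤ i := by omega
  rw [if_neg h6, hgc, if_pos him]
  ring

/-- The Euclidean pairing of a coefficient vector with the reduction of `f` equals a
coefficient of the product with the "reversed" polynomial. -/
lemma pairing (m : ℕ) (hm : 0 < m) (u : Fin m → F) (f : F[X]) :
    (∑ i : Fin m, u i * (f %ₘ ((X : F[X]) ^ m - 1)).coeff (i : ℕ)) =
      (((∑ i : Fin m, C (u i) * X ^ (m - 1 - (i : ℕ))) * f) %ₘ
        ((X : F[X]) ^ m - 1)).coeff (m - 1) := by
  set q : F[X] := X ^ m - 1 with hqdef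
  set V : F[X] := ∑ i : Fin m, C (u i) * X ^ (m - 1 - (i : ℕ)) with hV
  set r : F[X] := f %ₘ q with hr
  have hmr : (V * f) %ₘ q = (V * r) %ₘ q := by
    apply modByMonic_eq_of_dvd_sub (monic_q m hm)
    refine ⟨V * (f /ₘ q), ?_⟩
    have h := modByMonic_add_div f q
    nth_rewrite 1 [← h]
    ring
  have hrdeg : r.natDegree < m := by
    rcases eq_or_ne r 0 with h | h
    · simpa [h] using hm
    · have h2 := degree_modByMonic_lt f (monic_q m hm)
      rw [degree_q m hm] at h2
      exact (natDegree_lt_iff_degree_lt h).2 h2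
  have hVdeg : V.natDegree ≤ m - 1 :=
    natDegree_sum_le_of_forall_le _ _ fun i _ =>
      (natDegree_C_mul_X_pow_le _ _).trans (by omega)
  have hmul := natDegree_mul_le (p := V) (q := r)
  rw [hmr, coeff_mod m hm _ (by omega) (m - 1) (by omega)]
  have h2 : (V * r).coeff (m + (m - 1)) = 0 :=
    coeff_eq_zero_of_natDegree_lt (by omega)
  rw [h2, add_zero, hV, Finset.sum_mul, finset_sum_coeff]
  apply Finset.sum_congr rfl
  intro i _
  have hi := i.isLt
  rw [mul_assoc, coeff_C_mul]
  congr 1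
  rw [mul_comm ((X : F[X]) ^ (m - 1 - (i : ℕ))) r, coeff_mul_X_pow',
    if_pos (by omega : m - 1 - (i : ℕ) ≤ m - 1)]
  congr 1
  omega

lemma vanish (m : ℕ) (hm : 0 < m) (P : F[X])
    (h : ∀ a : F[X], ((a * P) %ₘ ((X : F[X]) ^ m - 1)).coeff (m - 1) = 0) :
    ((X : F[X]) ^ m - 1) ∣ P := by
  set q : F[X] := X ^ m - 1 with hqdef
  rw [← modByMonic_eq_zero_iff_dvd (monic_q m hm)]
  set r : F[X] := P %ₘ q with hr
  have hrdeg : r.natDegree < m := by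
    rcases eq_or_ne r 0 with h' | h'
    · simpa [h'] using hm
    · have h2 := degree_modByMonic_lt P (monic_q m hm)
      rw [degree_q m hm] at h2
      exact (natDegree_lt_iff_degree_lt h').2 h2
  have key : ∀ j, j < m → r.coeff (m - 1 - j) = 0 := by
    intro j hj
    have h1 := h (X ^ j)
    have hmr : (X ^ j * P) %ₘ q = (X ^ j * r) %ₘ q := by
      apply modByMonic_eq_of_dvd_sub (monic_q m hm)
      refine ⟨X ^ j * (P /ₘ q), ?_⟩
      have hh := modByMonic_add_div P q
      nth_rewrite 1 [← hh]
      ring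
    have hdeg : (X ^ j * r).natDegree < 2 * m := by
      have h3 := natDegree_mul_le (p := (X : F[X]) ^ j) (q := r)
      have h4 : ((X : F[X]) ^ j).natDegree = j := natDegree_X_pow j
      omega
    rw [hmr, coeff_mod m hm _ hdeg (m - 1) (by omega),
      mul_comm ((X : F[X]) ^ j) r, coeff_mul_X_pow', coeff_mul_X_pow',
      if_pos (by omega : j ≤ m - 1), if_pos (by omega : j ≤ m + (m - 1))] at h1
    have h0 : r.coeff (m + (m - 1) - j) = 0 :=
      coeff_eq_zero_of_natDegree_lt (by omega)
    rw [h0, add_zero] at h1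
    exact h1
  ext k
  simp only [coeff_zero]
  rcases lt_or_ge k m with hk | hk
  · have h2 := key (m - 1 - k) (by omega)
    rwa [show m - 1 - (m - 1 - k) = k by omega] at h2
  · exact coeff_eq_zero_of_natDegree_lt (by omega)

lemma reflect_sum' {α : Type*} (s : Finset α) (f : α → F[X]) (N : ℕ) :
    reflect N (∑ i ∈ s, f i) = ∑ i ∈ s, reflect N (f i) := by
  induction s using Finset.cons_induction with
  | empty => simp [reflect_zero]
  | cons a s ha ih => rw [Finset.sum_cons, Finset.sum_cons, reflect_add, ih]

lemma natDegree_X_sub_one : ((X : F[X]) - 1).natDegree = 1 := by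
  simpa using natDegree_X_sub_C (1 : F)

lemma reflect_X_sub_one_pow (n : ℕ) :
    reflect n (((X : F[X]) - 1) ^ n) = (1 - X) ^ n := by
  induction n with
  | zero => simp
  | succ n ih =>
    have h1 : ((X : F[X]) - 1) ^ (n + 1) = (X - 1) * (X - 1) ^ n := by ring
    have hd1 : ((X : F[X]) - 1).natDegree ≤ 1 := natDegree_X_sub_one.le
    have hdn : (((X : F[X]) - 1) ^ n).natDegree ≤ n := by
      rw [natDegree_pow, natDegree_X_sub_one, mul_one]
    have h3 : reflect 1 ((X : F[X]) - 1) = 1 - X := by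
      have e : (X : F[X]) - 1 = X + C (-1) := by
        rw [map_neg, map_one, sub_eq_add_neg]
      rw [e, reflect_add, reflect_one_X, reflect_C]
      rw [map_neg, map_one, pow_one]
      ring
    rw [h1, show n + 1 = 1 + n by omega, reflect_mul _ _ hd1 hdn, ih, h3]
    ring

lemma dvd_reflect (m k : ℕ) (hk : k ≤ m - 1) {V : F[X]} (hV : V.natDegree ≤ m - 1)
    (h : ((X : F[X]) - 1) ^ k ∣ V) : ((X : F[X]) - 1) ^ k ∣ reflect (m - 1) V := by
  obtain ⟨W, rfl⟩ := h
  rcases eq_or_ne W 0 with rfl | hW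
  · simp [reflect_zero]
  have hy0 : ((X : F[X]) - 1) ≠ 0 := by simpa using X_sub_C_ne_zero (1 : F)
  have hXk : (((X : F[X]) - 1) ^ k) ≠ 0 := pow_ne_zero _ hy0
  have hyk : (((X : F[X]) - 1) ^ k).natDegree = k := by
    rw [natDegree_pow, natDegree_X_sub_one, mul_one]
  have hdW : W.natDegree ≤ m - 1 - k := by
    have h2 := natDegree_mul hXk hW
    omega
  have hsplit : m - 1 = k + (m - 1 - k) := by omega
  rw [hsplit, reflect_mul _ _ hyk.le hdW, reflect_X_sub_one_pow]
  have hneg : ((1 : F[X]) - X) ^ k = (-1) ^ k * ((X : F[X]) - 1) ^ k := by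
    rw [show (1 : F[X]) - X = -(X - 1) by ring, neg_pow]
  rw [hneg]
  exact ⟨(-1) ^ k * reflect (m - 1 - k) W, by ring⟩

lemma reflect_V (m : ℕ) (hm : 0 < m) (u : Fin m → F) :
    reflect (m - 1) (∑ i : Fin m, C (u i) * X ^ (m - 1 - (i : ℕ))) =
      ∑ i : Fin m, C (u i) * X ^ (i : ℕ) := by
  rw [reflect_sum']
  apply Finset.sum_congr rfl
  intro i _
  have hi := i.isLt
  rw [reflect_C_mul_X_pow, revAt_le (by omega : m - 1 - (i : ℕ) ≤ m - 1),
    show m - 1 - (m - 1 - (i : ℕ)) = (i : ℕ) by omega]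

end QCAux

open QCAux

/-- For `m = p^t` (`p` the characteristic of `F_q`), the 2-generator QC code
generated by `([(x-1)^{r₁}], [v₁(x-1)^{r₁}])` and `([v₂(x-1)^{r₂}], [(x-1)^{r₂}])`
with `gcd(v₁v₂ - 1, x^{p^t} - 1) = 1` and `0 < r₁ < r₂ < (p^t - 1)/2`
is Euclidean dual-containing: every vector orthogonal to all codewords is itself
a codeword. -/
theorem QC_dualContaining_prime_power (F : Type) [Field F] [Fintype F]
    (p t : ℕ) [Fact p.Prime] [CharP F p] (ht : 0 < t) (r₁ r₂ : ℕ) (v₁ v₂ : F[X])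
    (hco : IsCoprime (v₁ * v₂ - 1) ((X : F[X]) ^ p ^ t - 1))
    (hr₁ : 0 < r₁) (hr₁₂ : r₁ < r₂) (hr₂ : 2 * r₂ < p ^ t - 1) :
    ∀ u : (Fin (p ^ t) → F) × (Fin (p ^ t) → F),
      (∀ a b : F[X],
        (∑ i : Fin (p ^ t),
          u.1 i * coeffVec F (p ^ t) (a * (X - 1) ^ r₁ + b * (v₂ * (X - 1) ^ r₂)) i) +
        (∑ i : Fin (p ^ t),
          u.2 i * coeffVec F (p ^ t) (a * (v₁ * (X - 1) ^ r₁) + b * (X - 1) ^ r₂) i) = 0) →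
      ∃ a b : F[X],
        u = (coeffVec F (p ^ t) (a * (X - 1) ^ r₁ + b * (v₂ * (X - 1) ^ r₂)),
             coeffVec F (p ^ t) (a * (v₁ * (X - 1) ^ r₁) + b * (X - 1) ^ r₂)) := by
  set m : ℕ := p ^ t with hmdef
  have hp : Nat.Prime p := Fact.out
  have hm : 0 < m := pow_pos hp.pos t
  set q : F[X] := X ^ m - 1 with hq
  intro u hu
  have hqm : q.Monic := by rw [hq]; exact monic_q m hm
  have hXm : ((X : F[X]) - 1) ^ m = X ^ m - 1 := by
    have h := sub_pow_char_pow (R := F[X]) (x := (X : F[X])) (y := 1) (p := p) (n := t)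
    rwa [one_pow] at h
  have hqfac : q = ((X : F[X]) - 1) ^ m := by rw [hq, hXm]
  -- the polynomials attached to u
  set U₁ : F[X] := ∑ i : Fin m, C (u.1 i) * X ^ (i : ℕ) with hU₁
  set U₂ : F[X] := ∑ i : Fin m, C (u.2 i) * X ^ (i : ℕ) with hU₂
  set V₁ : F[X] := ∑ i : Fin m, C (u.1 i) * X ^ (m - 1 - (i : ℕ)) with hV₁
  set V₂ : F[X] := ∑ i : Fin m, C (u.2 i) * X ^ (m - 1 - (i : ℕ)) with hV₂
  have hUc : ∀ (w : Fin m → F) (i : Fin m),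
      (∑ j : Fin m, C (w j) * X ^ (j : ℕ)).coeff (i : ℕ) = w i := by
    intro w i
    rw [finset_sum_coeff]
    simp only [coeff_C_mul, coeff_X_pow, mul_ite, mul_one, mul_zero]
    rw [Finset.sum_eq_single i (fun b _ hb => if_neg fun hh => hb (Fin.ext hh.symm))
      (fun hh => absurd (Finset.mem_univ i) hh)]
    simp
  have hUdeg : ∀ w : Fin m → F,
      (∑ j : Fin m, C (w j) * X ^ (j : ℕ)).natDegree ≤ m - 1 := by
    intro w
    apply natDegree_sum_le_of_forall_le
    intro i _
    have hi := i.isLt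
    exact (natDegree_C_mul_X_pow_le _ _).trans (by omega)
  have hUmod : ∀ w : Fin m → F,
      (∑ j : Fin m, C (w j) * X ^ (j : ℕ)) %ₘ q = ∑ j : Fin m, C (w j) * X ^ (j : ℕ) := by
    intro w
    refine (modByMonic_eq_self_iff hqm).2 ?_
    rw [hq, degree_q m hm]
    refine (degree_lt_iff_coeff_zero _ _).2 fun k hk => coeff_eq_zero_of_natDegree_lt ?_
    have := hUdeg w
    omega
  -- pairing reformulations
  have pair₁ : ∀ f : F[X],
      (∑ i : Fin m, u.1 i * coeffVec F m f i) = ((V₁ * f) %ₘ q).coeff (m - 1) := by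
    intro f
    have h := pairing m hm u.1 f
    simpa only [coeffVec, ← hq, ← hV₁] using h
  have pair₂ : ∀ f : F[X],
      (∑ i : Fin m, u.2 i * coeffVec F m f i) = ((V₂ * f) %ₘ q).coeff (m - 1) := by
    intro f
    have h := pairing m hm u.2 f
    simpa only [coeffVec, ← hq, ← hV₂] using h
  -- extract the two divisibility conditions from the orthogonality hypothesis
  have hd1 : q ∣ V₁ * (X - 1) ^ r₁ + V₂ * (v₁ * (X - 1) ^ r₁) := by
    rw [hq]
    apply vanish m hm
    intro a
    have h := hu a 0
    simp only [zero_mul, add_zero] at h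
    rw [pair₁, pair₂] at h
    have e : a * (V₁ * (X - 1) ^ r₁ + V₂ * (v₁ * (X - 1) ^ r₁)) =
        V₁ * (a * (X - 1) ^ r₁) + V₂ * (a * (v₁ * (X - 1) ^ r₁)) := by ring
    rw [← hq, e, add_modByMonic, coeff_add]
    exact h
  have hd2 : q ∣ V₁ * (v₂ * (X - 1) ^ r₂) + V₂ * (X - 1) ^ r₂ := by
    rw [hq]
    apply vanish m hm
    intro b
    have h := hu 0 b
    simp only [zero_mul, add_zero, zero_add] at h
    rw [pair₁, pair₂] at h
    have e : b * (V₁ * (v₂ * (X - 1) ^ r₂) + V₂ * (X - 1) ^ r₂) =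
        V₁ * (b * (v₂ * (X - 1) ^ r₂)) + V₂ * (b * (X - 1) ^ r₂) := by ring
    rw [← hq, e, add_modByMonic, coeff_add]
    exact h
  have hy0 : ((X : F[X]) - 1) ≠ 0 := by simpa using X_sub_C_ne_zero (1 : F)
  have hcancel : ∀ (s : F[X]) (r : ℕ), r ≤ m → q ∣ s * (X - 1) ^ r →
      ((X : F[X]) - 1) ^ (m - r) ∣ s := by
    intro s r hrm hdvd
    rw [hqfac, show m = r + (m - r) by omega, pow_add] at hdvd
    have h2 : ((X : F[X]) - 1) ^ r * ((X - 1) ^ (m - r)) ∣ (X - 1) ^ r * s := by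
      rwa [mul_comm s] at hdvd
    exact (mul_dvd_mul_iff_left (pow_ne_zero r hy0)).1 h2
  have hA1 : ((X : F[X]) - 1) ^ (m - r₁) ∣ V₁ + v₁ * V₂ := by
    apply hcancel _ r₁ (by omega)
    have e : (V₁ + v₁ * V₂) * (X - 1) ^ r₁ =
        V₁ * (X - 1) ^ r₁ + V₂ * (v₁ * (X - 1) ^ r₁) := by ring
    rw [e]; exact hd1
  have hA2 : ((X : F[X]) - 1) ^ (m - r₂) ∣ v₂ * V₁ + V₂ := by
    apply hcancel _ r₂ (by omega)
    have e : (v₂ * V₁ + V₂) * (X - 1) ^ r₂ =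
        V₁ * (v₂ * (X - 1) ^ r₂) + V₂ * (X - 1) ^ r₂ := by ring
    rw [e]; exact hd2
  have hmono : ((X : F[X]) - 1) ^ (m - r₂) ∣ V₁ + v₁ * V₂ :=
    dvd_trans (pow_dvd_pow _ (by omega)) hA1
  have hV2' : ((X : F[X]) - 1) ^ (m - r₂) ∣ (1 - v₁ * v₂) * V₂ := by
    have e : (1 - v₁ * v₂) * V₂ = (v₂ * V₁ + V₂) - v₂ * (V₁ + v₁ * V₂) := by ring
    rw [e]; exact dvd_sub hA2 (hmono.mul_left v₂)
  have hcop : IsCoprime (((X : F[X]) - 1) ^ (m - r₂)) (1 - v₁ * v₂) := by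
    obtain ⟨α, β, hα⟩ := hco
    refine ⟨β * (X - 1) ^ r₂, -α, ?_⟩
    have hpow : ((X : F[X]) - 1) ^ r₂ * ((X - 1) ^ (m - r₂)) = X ^ m - 1 := by
      rw [← pow_add, show r₂ + (m - r₂) = m by omega, hXm]
    linear_combination β * hpow + hα
  have hV2 : ((X : F[X]) - 1) ^ (m - r₂) ∣ V₂ := hcop.dvd_of_dvd_mul_left hV2'
  have hV1 : ((X : F[X]) - 1) ^ (m - r₂) ∣ V₁ := by
    have e : V₁ = (V₁ + v₁ * V₂) - v₁ * V₂ := by ring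
    rw [e]; exact dvd_sub hmono (hV2.mul_left v₁)
  -- transfer divisibility from V to U via reflection
  have hU₁r : U₁ = reflect (m - 1) V₁ := by
    rw [hV₁, reflect_V m hm u.1, hU₁]
  have hU₂r : U₂ = reflect (m - 1) V₂ := by
    rw [hV₂, reflect_V m hm u.2, hU₂]
  have hVdeg : ∀ w : Fin m → F,
      (∑ j : Fin m, C (w j) * X ^ (m - 1 - (j : ℕ))).natDegree ≤ m - 1 := by
    intro w
    apply natDegree_sum_le_of_forall_le
    intro i _
    exact (natDegree_C_mul_X_pow_le _ _).trans (by omega)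
  have hVd₁ : V₁.natDegree ≤ m - 1 := by rw [hV₁]; exact hVdeg u.1
  have hVd₂ : V₂.natDegree ≤ m - 1 := by rw [hV₂]; exact hVdeg u.2
  have hU1dvd : ((X : F[X]) - 1) ^ (m - r₂) ∣ U₁ := by
    rw [hU₁r]; exact dvd_reflect m (m - r₂) (by omega) hVd₁ hV1
  have hU2dvd : ((X : F[X]) - 1) ^ (m - r₂) ∣ U₂ := by
    rw [hU₂r]; exact dvd_reflect m (m - r₂) (by omega) hVd₂ hV2
  -- construct the witnesses
  obtain ⟨A, hA⟩ : ((X : F[X]) - 1) ^ r₁ ∣ U₁ :=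
    dvd_trans (pow_dvd_pow _ (by omega : r₁ ≤ m - r₂)) hU1dvd
  obtain ⟨B, hB⟩ : ((X : F[X]) - 1) ^ r₂ ∣ U₂ - v₁ * U₁ := by
    apply dvd_trans (pow_dvd_pow _ (by omega : r₂ ≤ m - r₂))
    exact dvd_sub hU2dvd (hU1dvd.mul_left v₁)
  obtain ⟨α, β, hα⟩ := hco
  refine ⟨A - B * (-α) * v₂ * (X - 1) ^ (r₂ - r₁), B * (-α), ?_⟩
  have hyr : ((X : F[X]) - 1) ^ (r₂ - r₁) * (X - 1) ^ r₁ = (X - 1) ^ r₂ := by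
    rw [← pow_add]; congr 1; omega
  have e₁ : (A - B * (-α) * v₂ * (X - 1) ^ (r₂ - r₁)) * (X - 1) ^ r₁ +
      (B * (-α)) * (v₂ * (X - 1) ^ r₂) = U₁ := by
    linear_combination -hA + α * B * v₂ * hyr
  have e₂ : (A - B * (-α) * v₂ * (X - 1) ^ (r₂ - r₁)) * (v₁ * (X - 1) ^ r₁) +
      (B * (-α)) * (X - 1) ^ r₂ = U₂ + (-(B * β * (X - 1) ^ r₂)) * q := by
    linear_combination (-v₁) * hA + α * B * v₁ * v₂ * hyr +
      B * ((X : F[X]) - 1) ^ r₂ * hα - hB + B * β * ((X : F[X]) - 1) ^ r₂ * hq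
  have hmod₁ : ((A - B * (-α) * v₂ * (X - 1) ^ (r₂ - r₁)) * (X - 1) ^ r₁ +
      (B * (-α)) * (v₂ * (X - 1) ^ r₂)) %ₘ q = U₁ := by
    rw [e₁, hU₁]; exact hUmod u.1
  have hmod₂ : ((A - B * (-α) * v₂ * (X - 1) ^ (r₂ - r₁)) * (v₁ * (X - 1) ^ r₁) +
      (B * (-α)) * (X - 1) ^ r₂) %ₘ q = U₂ := by
    have h1 : (U₂ + (-(B * β * (X - 1) ^ r₂)) * q) %ₘ q = U₂ %ₘ q :=
      modByMonic_eq_of_dvd_sub hqm ⟨-(B * β * (X - 1) ^ r₂), by ring⟩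
    rw [e₂, h1, hU₂]; exact hUmod u.2
  refine Prod.ext ?_ ?_
  · funext i
    show u.1 i = coeffVec F m _ i
    simp only [coeffVec]
    rw [← hq, hmod₁]
    exact (hUc u.1 i).symm
  · funext i
    show u.2 i = coeffVec F m _ i
    simp only [coeffVec]
    rw [← hq, hmod₂]
    exact (hUc u.2 i).symm
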